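/- arXiv:1512.01748 — 3 statements merged into one kernel-verified Lean document; each statement's English description precedes it below -/
import Mathlib

section
/- Let D be a real n×n matrix with singular value decomposition D = U · diag(σ) · Vᵀ, where U, V are orthogonal and σ₁ ≥ σ₂ ≥ ⋯ ≥ σ_n ≥ 0. Fix 1 ≤ K ≤ n and α ∈ [0, 1], and let X̃ = Σ_{k=1}^{K} σ_k u_k v_kᵀ be the best rank-K approximation of D given by truncated SVD. Then X̃ is a fixed point of the rank-K update map: X̃ minimizes ‖Y − (α·X̃ + (1−α)·D)‖_F over all real n×n matrices Y with rank(Y) ≤ K. -/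
/-!
Write `M = α X̃ + (1 - α) D`. Then `M = U diag(τ) Vᵀ` with `τ_k = σ_k` for `k < K` and
`τ_k = (1 - α) σ_k` otherwise; `τ` is still non-increasing and non-negative and has the same
first `K` entries as `σ`, so `X̃` is also the truncated SVD of `M`, and the claim is the
Eckart–Young theorem for `M` in the Frobenius norm.

Conjugating by the orthogonal `U` and `V` reduces Eckart–Young to a diagonal target `diag(τ)`.
Let `W` be the column space of `Y`, `P` the orthogonal projection onto it and
`w_k = ‖P e_k‖²`. Comparing each column of `Y` with the projection of the corresponding column
of `diag(τ)` gives `‖Y - diag(τ)‖² ≥ ∑ τ_k² (1 - w_k)`. The weights satisfy `0 ≤ w_k ≤ 1` and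
`∑ w_k = tr P = dim W ≤ K`, so `∑ τ_k² w_k ≤ ∑_{k<K} τ_k²`, and the bound becomes
`∑_{k≥K} τ_k² = ‖X̃ - M‖²`.
-/

open Matrix Finset

/-- Frobenius norm of a real matrix. -/
noncomputable def frob {n : ℕ} (M : Matrix (Fin n) (Fin n) ℝ) : ℝ :=
  Real.sqrt (∑ i, ∑ j, (M i j) ^ 2)

theorem sum_mul_le_sum_of_threshold {ι : Type*} [Fintype ι] (s : Finset ι) {lam w : ι → ℝ}
    {c : ℝ} (hc : 0 ≤ c) (hs : ∀ i ∈ s, c ≤ lam i) (hsc : ∀ i ∉ s, lam i ≤ c)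
    (hw0 : ∀ i, 0 ≤ w i) (hw1 : ∀ i, w i ≤ 1) (hsum : ∑ i, w i ≤ #s) :
    ∑ i, lam i * w i ≤ ∑ i ∈ s, lam i := by
  classical
  have hin : c * ∑ i ∈ s, (1 - w i) ≤ ∑ i ∈ s, lam i * (1 - w i) := by
    rw [mul_sum]
    exact sum_le_sum fun i hi => mul_le_mul_of_nonneg_right (hs i hi) (sub_nonneg.mpr (hw1 i))
  have hout : ∑ i ∈ sᶜ, lam i * w i ≤ c * ∑ i ∈ sᶜ, w i := by
    rw [mul_sum]
    exact sum_le_sum fun i hi => mul_le_mul_of_nonneg_right (hsc i (mem_compl.mp hi)) (hw0 i)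
  have hslack : 0 ≤ c * (#s - ∑ i, w i) := mul_nonneg hc (sub_nonneg.mpr hsum)
  rw [← sum_add_sum_compl s w] at hslack
  rw [← sum_add_sum_compl s (fun i => lam i * w i)]
  simp only [mul_sub, mul_one, sum_sub_distrib, sum_const, nsmul_eq_mul] at hin hslack
  linarith

theorem Submodule.norm_sq_sub_norm_sq_starProjection_le {E : Type*} [NormedAddCommGroup E]
    [InnerProductSpace ℝ E] {W : Submodule ℝ E} [W.HasOrthogonalProjection] {y : E}
    (hy : y ∈ W) (m : E) : ‖m‖ ^ 2 - ‖W.starProjection m‖ ^ 2 ≤ ‖y - m‖ ^ 2 := by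
  have hmin : ‖m - W.starProjection m‖ ≤ ‖m - y‖ := by
    rw [W.starProjection_minimal m]
    exact ciInf_le ⟨0, Set.forall_mem_range.mpr fun _ => norm_nonneg _⟩ (⟨y, hy⟩ : W)
  have hpyth := W.norm_sq_eq_add_norm_sq_starProjection m
  rw [W.starProjection_orthogonal', _root_.sub_apply, one_apply_eq_self] at hpyth
  rw [norm_sub_rev y m]
  nlinarith [norm_nonneg (m - W.starProjection m)]

theorem Submodule.sum_norm_sq_starProjection_eq_finrank {E ι : Type*} [NormedAddCommGroup E]
    [InnerProductSpace ℝ E] [FiniteDimensional ℝ E] [Fintype ι] (W : Submodule ℝ E)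
    (b : OrthonormalBasis ι ℝ E) :
    ∑ i, ‖W.starProjection (b i)‖ ^ 2 = Module.finrank ℝ W := by
  have hproj : LinearMap.IsProj W (W.starProjection : E →ₗ[ℝ] E) :=
    ⟨fun x => W.starProjection_apply_mem x, fun x hx => W.starProjection_eq_self_iff.mpr hx⟩
  rw [← hproj.trace, LinearMap.trace_eq_sum_inner _ b]
  refine sum_congr rfl fun i _ => ?_
  rw [← real_inner_self_eq_norm_sq, ContinuousLinearMap.coe_coe,
    W.inner_starProjection_left_eq_right,
    W.starProjection_eq_self_iff.mpr (W.starProjection_apply_mem _), real_inner_comm]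

def truncate {n : ℕ} (K : ℕ) (τ : Fin n → ℝ) : Fin n → ℝ :=
  fun k => if (k : ℕ) < K then τ k else 0

theorem truncate_congr {n K : ℕ} {τ σ : Fin n → ℝ} (h : ∀ k : Fin n, (k : ℕ) < K → τ k = σ k) :
    truncate K τ = truncate K σ :=
  funext fun k => by
    unfold truncate
    split_ifs with hk
    exacts [h k hk, rfl]

theorem sum_sq_truncate_sub {n K : ℕ} (τ : Fin n → ℝ) :
    ∑ k, (truncate K τ k - τ k) ^ 2 =
      ∑ k, τ k ^ 2 - ∑ k ∈ univ.filter (fun k : Fin n => (k : ℕ) < K), τ k ^ 2 := by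
  rw [sum_filter, ← sum_sub_distrib]
  refine sum_congr rfl fun k _ => ?_
  unfold truncate
  split_ifs <;> ring

theorem Antitone.truncate {n : ℕ} (K : ℕ) {τ : Fin n → ℝ} (hτ : Antitone τ)
    (hτ0 : ∀ k, 0 ≤ τ k) : Antitone (truncate K τ) := by
  intro a b hab
  unfold _root_.truncate
  split_ifs with hb ha ha
  · exact hτ hab
  · exact absurd (lt_of_le_of_lt (Fin.le_def.mp hab) hb) ha
  · exact hτ0 a
  · exact le_rfl

namespace Matrix

theorem sum_sq_eq_trace_transpose_mul {m n : Type*} [Fintype m] [Fintype n]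
    (A : Matrix m n ℝ) : ∑ i, ∑ j, A i j ^ 2 = (Aᵀ * A).trace := by
  simp only [trace, diag, mul_apply, transpose_apply, sq]
  exact sum_comm

theorem sum_sq_transpose_mul_mul {m n : Type*} [Fintype m] [Fintype n] [DecidableEq m]
    [DecidableEq n] {U : Matrix m m ℝ} {V : Matrix n n ℝ} (hU : U * Uᵀ = 1) (hV : V * Vᵀ = 1)
    (A : Matrix m n ℝ) : ∑ i, ∑ j, (Uᵀ * A * V) i j ^ 2 = ∑ i, ∑ j, A i j ^ 2 := by
  rw [sum_sq_eq_trace_transpose_mul, sum_sq_eq_trace_transpose_mul, transpose_mul,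
    transpose_mul, transpose_transpose]
  simp only [Matrix.mul_assoc]
  rw [← Matrix.mul_assoc U, hU, Matrix.one_mul, trace_mul_comm]
  simp only [Matrix.mul_assoc]
  rw [hV, Matrix.mul_one]

theorem sum_sq_eq_sum_norm_sq_col {m n : Type*} [Fintype m] [Fintype n] (A : Matrix m n ℝ) :
    ∑ i, ∑ j, A i j ^ 2 = ∑ j, ‖WithLp.toLp 2 (A.col j)‖ ^ 2 := by
  simp only [EuclideanSpace.real_norm_sq_eq, col_apply]
  exact sum_comm

theorem sum_sq_diagonal {n : Type*} [Fintype n] [DecidableEq n] (d : n → ℝ) :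
    ∑ i, ∑ j, diagonal d i j ^ 2 = ∑ i, d i ^ 2 :=
  sum_congr rfl fun i _ => by simp [diagonal_apply, ite_pow]

theorem finrank_span_toLp_col_eq_rank {m n : Type*} [Fintype m] [Fintype n]
    (A : Matrix m n ℝ) :
    Module.finrank ℝ (Submodule.span ℝ (Set.range fun j => WithLp.toLp 2 (A.col j))) =
      A.rank := by
  rw [rank_eq_finrank_span_cols,
    ← LinearEquiv.finrank_map_eq (WithLp.linearEquiv 2 ℝ (m → ℝ)).symm,
    Submodule.map_span, ← Set.range_comp]
  rfl

theorem rank_mul_mul_le_middle {l m n o R : Type*} [Fintype m] [Fintype n] [Fintype o]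
    [CommRing R] [StrongRankCondition R] (A : Matrix l m R) (B : Matrix m n R)
    (C : Matrix n o R) : (A * B * C).rank ≤ B.rank :=
  (rank_mul_le_left _ _).trans (rank_mul_le_right _ _)

theorem rank_diagonal_truncate_le {n : ℕ} (K : ℕ) (τ : Fin n → ℝ) :
    (diagonal (truncate K τ)).rank ≤ K := by
  classical
  rw [rank_diagonal, Fintype.card_subtype]
  calc #(univ.filter fun k => truncate K τ k ≠ 0)
      ≤ #(univ.filter fun k : Fin n => (k : ℕ) < K) :=
        card_le_card fun k => by simp +contextual [truncate]
    _ = min n K := Fin.card_filter_val_lt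
    _ ≤ K := min_le_right n K

theorem sum_smul_vecMulVec_eq_mul_diagonal_mul_transpose {m n r R : Type*} [Fintype r]
    [DecidableEq r] [CommSemiring R] (U : Matrix m r R) (V : Matrix n r R) (d : r → R) :
    ∑ k, d k • vecMulVec (fun i => U i k) (fun j => V j k) = U * diagonal d * Vᵀ := by
  ext i j
  rw [mul_apply, Matrix.sum_apply]
  refine sum_congr rfl fun k _ => ?_
  simp only [smul_apply, vecMulVec_apply, smul_eq_mul, mul_diagonal, transpose_apply]
  ring

theorem sum_sq_diagonal_truncate_sub_le {n K : ℕ} (hK1 : 1 ≤ K) (hKn : K ≤ n)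
    {τ : Fin n → ℝ} (hτ : Antitone τ) (hτ0 : ∀ k, 0 ≤ τ k) {Z : Matrix (Fin n) (Fin n) ℝ}
    (hZ : Z.rank ≤ K) :
    ∑ i, ∑ j, (diagonal (truncate K τ) - diagonal τ) i j ^ 2 ≤
      ∑ i, ∑ j, (Z - diagonal τ) i j ^ 2 := by
  set s := univ.filter fun k : Fin n => (k : ℕ) < K
  set W := Submodule.span ℝ (Set.range fun j => WithLp.toLp 2 (Z.col j))
  set b := EuclideanSpace.basisFun (Fin n) ℝ
  set w := fun j => ‖W.starProjection (b j)‖ ^ 2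
  have hdiag_col : ∀ j, WithLp.toLp 2 ((diagonal τ).col j) = τ j • b j := by
    intro j
    ext i
    rcases eq_or_ne i j with rfl | hij <;> simp [b, *]
  have hcol : ∀ j, τ j ^ 2 * (1 - w j) ≤ ‖WithLp.toLp 2 ((Z - diagonal τ).col j)‖ ^ 2 := by
    intro j
    have hy : WithLp.toLp 2 (Z.col j) ∈ W := Submodule.subset_span ⟨j, rfl⟩
    have hproj := W.norm_sq_sub_norm_sq_starProjection_le hy (τ j • b j)
    rw [map_smul, norm_smul, norm_smul, b.orthonormal.1 j] at hproj
    change τ j ^ 2 * (1 - w j) ≤ ‖WithLp.toLp 2 (Z.col j - (diagonal τ).col j)‖ ^ 2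
    rw [WithLp.toLp_sub, hdiag_col]
    simp only [w, Real.norm_eq_abs] at hproj ⊢
    nlinarith [sq_abs (τ j)]
  have hweights : ∑ j, τ j ^ 2 * w j ≤ ∑ j ∈ s, τ j ^ 2 := by
    have hlast : K - 1 < n := by omega
    refine sum_mul_le_sum_of_threshold s (c := τ ⟨K - 1, hlast⟩ ^ 2) (sq_nonneg _)
      (fun i hi => ?_) (fun i hi => ?_) (fun j => sq_nonneg _) (fun j => ?_) ?_
    · simp only [s, mem_filter, mem_univ, true_and] at hi
      exact pow_le_pow_left₀ (hτ0 _) (hτ (Fin.le_def.mpr (by simp; omega))) 2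
    · simp only [s, mem_filter, mem_univ, true_and, not_lt] at hi
      exact pow_le_pow_left₀ (hτ0 _) (hτ (Fin.le_def.mpr (by simp; omega))) 2
    · calc w j ≤ ‖b j‖ ^ 2 :=
            pow_le_pow_left₀ (norm_nonneg _) (W.norm_starProjection_apply_le _) 2
        _ = 1 := by rw [b.orthonormal.1 j, one_pow]
    · calc ∑ j, w j = Module.finrank ℝ W := W.sum_norm_sq_starProjection_eq_finrank b
        _ ≤ #s := by
          rw [finrank_span_toLp_col_eq_rank, Fin.card_filter_val_lt, min_eq_right hKn]
          exact_mod_cast hZ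
  calc ∑ i, ∑ j, (diagonal (truncate K τ) - diagonal τ) i j ^ 2
      = ∑ j, τ j ^ 2 - ∑ j ∈ s, τ j ^ 2 := by
        rw [diagonal_sub, sum_sq_diagonal]
        exact sum_sq_truncate_sub τ
    _ ≤ ∑ j, τ j ^ 2 * (1 - w j) := by
        simp only [mul_sub, mul_one, sum_sub_distrib]
        linarith
    _ ≤ ∑ i, ∑ j, (Z - diagonal τ) i j ^ 2 := by
        rw [sum_sq_eq_sum_norm_sq_col]
        exact sum_le_sum fun j _ => hcol j

theorem sum_sq_svd_truncate_sub_le {n K : ℕ} (hK1 : 1 ≤ K) (hKn : K ≤ n)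
    {U V : Matrix (Fin n) (Fin n) ℝ} (hU : Uᵀ * U = 1) (hV : Vᵀ * V = 1)
    {τ : Fin n → ℝ} (hτ : Antitone τ) (hτ0 : ∀ k, 0 ≤ τ k) {Y : Matrix (Fin n) (Fin n) ℝ}
    (hY : Y.rank ≤ K) :
    ∑ i, ∑ j, (U * diagonal (truncate K τ) * Vᵀ - U * diagonal τ * Vᵀ) i j ^ 2 ≤
      ∑ i, ∑ j, (Y - U * diagonal τ * Vᵀ) i j ^ 2 := by
  have hUU : U * Uᵀ = 1 := mul_eq_one_comm.mp hU
  have hVV : V * Vᵀ = 1 := mul_eq_one_comm.mp hV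
  have hconj (A : Matrix (Fin n) (Fin n) ℝ) : Uᵀ * (U * A * Vᵀ) * V = A := by
    rw [← Matrix.mul_assoc, ← Matrix.mul_assoc, hU, Matrix.one_mul, Matrix.mul_assoc, hV,
      Matrix.mul_one]
  rw [← sum_sq_transpose_mul_mul hUU hVV, ← sum_sq_transpose_mul_mul hUU hVV (Y - _)]
  simp only [Matrix.mul_sub, Matrix.sub_mul, hconj]
  exact sum_sq_diagonal_truncate_sub_le hK1 hKn hτ hτ0
    ((rank_mul_mul_le_middle _ _ _).trans hY)

end Matrix

/-- The truncated-SVD best rank-`K` approximation `X̃ = ∑_{k<K} σ_k u_k v_kᵀ` of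
`D` is a fixed point of the rank-`K` ADMM update map: `X̃` minimizes
`‖Y − (α X̃ + (1−α) D)‖_F` over all matrices `Y` of rank at most `K`. -/
theorem truncated_svd_is_fixed_point {n : ℕ}
    (D : Matrix (Fin n) (Fin n) ℝ)
    (U V : Matrix (Fin n) (Fin n) ℝ) (σ : Fin n → ℝ)
    (hU : Uᵀ * U = 1) (hV : Vᵀ * V = 1)
    (hD : D = U * Matrix.diagonal σ * Vᵀ)
    (hσmono : Antitone σ) (hσnonneg : ∀ i, 0 ≤ σ i)
    (K : ℕ) (hK1 : 1 ≤ K) (hKn : K ≤ n)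
    (α : ℝ) (hα : α ∈ Set.Icc (0 : ℝ) 1)
    (Xtilde : Matrix (Fin n) (Fin n) ℝ)
    (hX : Xtilde = ∑ k ∈ Finset.univ.filter (fun k : Fin n => (k : ℕ) < K),
      σ k • Matrix.vecMulVec (fun i => U i k) (fun j => V j k)) :
    Xtilde.rank ≤ K ∧
      ∀ Y : Matrix (Fin n) (Fin n) ℝ, Y.rank ≤ K →
        frob (Xtilde - (α • Xtilde + (1 - α) • D)) ≤
          frob (Y - (α • Xtilde + (1 - α) • D)) := by
  obtain ⟨hα0, hα1⟩ := hα
  have hXsvd : Xtilde = U * diagonal (truncate K σ) * Vᵀ := by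
    rw [hX, sum_filter, ← sum_smul_vecMulVec_eq_mul_diagonal_mul_transpose]
    refine sum_congr rfl fun k _ => ?_
    unfold truncate
    split_ifs <;> simp
  set τ : Fin n → ℝ := fun k => α * truncate K σ k + (1 - α) * σ k
  have hMsvd : α • Xtilde + (1 - α) • D = U * diagonal τ * Vᵀ := by
    have hdiag : diagonal τ = α • diagonal (truncate K σ) + (1 - α) • diagonal σ := by
      rw [← diagonal_smul, ← diagonal_smul, diagonal_add]
      rfl
    rw [hXsvd, hD, hdiag, Matrix.mul_add, Matrix.add_mul, Matrix.mul_smul, Matrix.smul_mul,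
      Matrix.mul_smul, Matrix.smul_mul]
  have hτ : Antitone τ :=
    ((hσmono.truncate K hσnonneg).const_mul hα0).add (hσmono.const_mul (sub_nonneg.mpr hα1))
  have hτ0 : ∀ k, 0 ≤ τ k := fun k => by
    unfold τ truncate
    split_ifs <;> nlinarith [hσnonneg k]
  have htrunc : truncate K τ = truncate K σ :=
    truncate_congr fun k hk => by simp only [τ, truncate, if_pos hk]; ring
  refine ⟨?_, fun Y hY => ?_⟩
  · rw [hXsvd]
    exact (rank_mul_mul_le_middle _ _ _).trans (rank_diagonal_truncate_le K σ)
  · rw [hMsvd, hXsvd, ← htrunc]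
    exact Real.sqrt_le_sqrt (sum_sq_svd_truncate_sub_le hK1 hKn hU hV hτ hτ0 hY)
end

section
/- Let D be a real n×n matrix with singular value decomposition D = U · diag(σ) · Vᵀ, where U, V are orthogonal and σ₁ ≥ σ₂ ≥ ⋯ ≥ σ_n ≥ 0. Fix 1 ≤ K ≤ n and α ∈ [0, 1], and let I ⊆ {1, …, n} be a subset of size K such that σ_i ≥ (1−α)·σ_j for every i ∈ I and j ∉ I. Then X̃ = Σ_{i∈I} σ_i u_i v_iᵀ is a fixed point of the rank-K update map: X̃ minimizes ‖Y − (α·X̃ + (1−α)·D)‖_F over all real n×n matrices Y with rank(Y) ≤ K. -/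
open Matrix Finset

lemma mul_diagonal_mul_transpose_eq_sum_vecMulVec {k m n : Type*} [Fintype k]
    [DecidableEq k] (U : Matrix m k ℝ) (V : Matrix n k ℝ) (ν : k → ℝ) :
    U * diagonal ν * Vᵀ = ∑ i, ν i • vecMulVec (fun r => U r i) (fun c => V c i) := by
  ext r c
  simp only [mul_apply, diagonal_apply, transpose_apply, Matrix.sum_apply, Matrix.smul_apply,
    vecMulVec_apply, smul_eq_mul, mul_ite, mul_zero, sum_ite_eq', mem_univ, if_true]
  exact sum_congr rfl fun i _ => by ring

lemma rank_mul_diagonal_mul_le_card {k m n : Type*} [Fintype k] [DecidableEq k] [Fintype n]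
    (U : Matrix m k ℝ) (W : Matrix k n ℝ) {ν : k → ℝ} {I : Finset k} (hν : ∀ i ∉ I, ν i = 0) :
    (U * diagonal ν * W).rank ≤ I.card := by
  classical
  calc (U * diagonal ν * W).rank ≤ (diagonal ν).rank :=
        (rank_mul_le_left _ _).trans (rank_mul_le_right _ _)
    _ ≤ I.card := by
        rw [rank_diagonal, Fintype.card_subtype]
        exact card_le_card fun i hi => by_contra fun h => (mem_filter.1 hi).2 (hν i h)

section

variable {ι k m n : Type*} [Fintype ι] [Fintype m] [Fintype n]

noncomputable def frobSq (A : Matrix m n ℝ) : ℝ := ∑ i, ∑ j, A i j ^ 2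

lemma frobSq_eq_trace (A : Matrix m n ℝ) : frobSq A = trace (Aᵀ * A) := by
  simp only [frobSq, trace, diag_apply, mul_apply, transpose_apply, sq]
  exact Finset.sum_comm

lemma frobSq_mul_diagonal_mul_transpose [Fintype k] [DecidableEq k] {U : Matrix m k ℝ}
    {V : Matrix n k ℝ} (hU : Uᵀ * U = 1) (hV : Vᵀ * V = 1) (ν : k → ℝ) :
    frobSq (U * diagonal ν * Vᵀ) = ∑ i, ν i ^ 2 := by
  have hgram : (U * diagonal ν * Vᵀ)ᵀ * (U * diagonal ν * Vᵀ) = V * diagonal (ν ^ 2) * Vᵀ := by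
    simp only [transpose_mul, diagonal_transpose, transpose_transpose, Matrix.mul_assoc]
    rw [← Matrix.mul_assoc Uᵀ U, hU, Matrix.one_mul, ← Matrix.mul_assoc (diagonal ν),
      diagonal_mul_diagonal, sq]
    rfl
  rw [frobSq_eq_trace, hgram, trace_mul_comm, ← Matrix.mul_assoc, hV, Matrix.one_mul,
    trace_diagonal]
  rfl

lemma dotProduct_mulVec_self_of_transpose_mul_self [DecidableEq n] {V : Matrix m n ℝ}
    (hV : Vᵀ * V = 1) (z : n → ℝ) : (V *ᵥ z) ⬝ᵥ (V *ᵥ z) = z ⬝ᵥ z := by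
  rw [dotProduct_mulVec, ← mulVec_transpose, mulVec_mulVec, hV, one_mulVec]

lemma sum_sq_dotProduct_le_of_orthonormal {w : ι → EuclideanSpace ℝ n} (hw : Orthonormal ℝ w)
    (x : n → ℝ) : ∑ a, ((w a).ofLp ⬝ᵥ x) ^ 2 ≤ x ⬝ᵥ x := by
  have h := hw.sum_inner_products_le (x := WithLp.toLp 2 x) (s := univ)
  rw [← real_inner_self_eq_norm_sq] at h
  simp only [Real.norm_eq_abs, sq_abs, EuclideanSpace.inner_eq_star_dotProduct, star_trivial] at h
  simpa only [dotProduct_comm x] using h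

lemma sum_dotProduct_self_transpose_mulVec_le_frobSq (A : Matrix m n ℝ)
    {w : ι → EuclideanSpace ℝ m} (hw : Orthonormal ℝ w) :
    ∑ a, (Aᵀ *ᵥ (w a).ofLp) ⬝ᵥ (Aᵀ *ᵥ (w a).ofLp) ≤ frobSq A := by
  have hcol : ∀ a j, (Aᵀ *ᵥ (w a).ofLp) j = (w a).ofLp ⬝ᵥ fun i => A i j := fun a j => by
    simp [mulVec, dotProduct, mul_comm]
  calc ∑ a, (Aᵀ *ᵥ (w a).ofLp) ⬝ᵥ (Aᵀ *ᵥ (w a).ofLp)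
      = ∑ j, ∑ a, ((w a).ofLp ⬝ᵥ fun i => A i j) ^ 2 := by
        simp only [dotProduct, hcol, ← sq]
        exact sum_comm
    _ ≤ ∑ j, (fun i => A i j) ⬝ᵥ (fun i => A i j) :=
        sum_le_sum fun j _ => sum_sq_dotProduct_le_of_orthonormal hw _
    _ = frobSq A := by
        simp only [frobSq, dotProduct, ← sq]
        exact sum_comm

lemma exists_orthonormal_mulVec_eq_zero [DecidableEq n] (A : Matrix m n ℝ) :
    ∃ (r : ℕ) (w : Fin r → EuclideanSpace ℝ n),
      Orthonormal ℝ w ∧ (∀ a, A *ᵥ (w a).ofLp = 0) ∧ Fintype.card n = A.rank + r := by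
  set S := LinearMap.ker (toEuclideanLin A)
  let b := stdOrthonormalBasis ℝ S
  refine ⟨_, fun a => (b a : EuclideanSpace ℝ n), b.orthonormal.comp_linearIsometry S.subtypeₗᵢ,
    fun a => congrArg WithLp.ofLp (b a).2, ?_⟩
  have hrank : Module.finrank ℝ (LinearMap.range (toEuclideanLin A)) = A.rank := by
    rw [rank_eq_finrank_range_toLin A (PiLp.basisFun 2 ℝ m) (PiLp.basisFun 2 ℝ n)]
    rfl
  rw [← hrank, LinearMap.finrank_range_add_finrank_ker, finrank_euclideanSpace]

lemma sum_sq_transpose_mulVec_apply_le_one [DecidableEq k] {U : Matrix n k ℝ}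
    (hU : Uᵀ * U = 1) {w : ι → EuclideanSpace ℝ n} (hw : Orthonormal ℝ w) (i : k) :
    ∑ a, (Uᵀ *ᵥ (w a).ofLp) i ^ 2 ≤ 1 := by
  have hcol : (fun r => U r i) ⬝ᵥ (fun r => U r i) = 1 := by
    simpa [mul_apply, dotProduct] using congrFun (congrFun hU i) i
  have h := sum_sq_dotProduct_le_of_orthonormal hw fun r => U r i
  rw [hcol] at h
  convert h using 3 with a
  simp [mulVec, dotProduct, mul_comm]

lemma sum_sum_sq_transpose_mulVec_apply [DecidableEq n] {U : Matrix n n ℝ} (hU : U * Uᵀ = 1)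
    {w : ι → EuclideanSpace ℝ n} (hw : Orthonormal ℝ w) :
    ∑ i, ∑ a, (Uᵀ *ᵥ (w a).ofLp) i ^ 2 = Fintype.card ι := by
  have hUT : Uᵀᵀ * Uᵀ = 1 := by rwa [transpose_transpose]
  rw [sum_comm]
  calc ∑ a, ∑ i, (Uᵀ *ᵥ (w a).ofLp) i ^ 2
    _ = ∑ a, ‖w a‖ ^ 2 := sum_congr rfl fun a _ => by
        have h := dotProduct_mulVec_self_of_transpose_mul_self hUT (w a).ofLp
        simp only [dotProduct, ← sq] at h
        rw [h, EuclideanSpace.real_norm_sq_eq]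
    _ = Fintype.card ι := by simp [hw.1]

lemma sum_compl_le_sum_mul_of_threshold [DecidableEq ι] {I : Finset ι} {a t : ι → ℝ} {c : ℝ}
    (hc : 0 ≤ c) (haI : ∀ i ∈ I, c ≤ a i) (haIc : ∀ j ∉ I, a j ≤ c)
    (ht0 : ∀ i, 0 ≤ t i) (ht1 : ∀ i, t i ≤ 1) (hsum : (Iᶜ.card : ℝ) ≤ ∑ i, t i) :
    ∑ j ∈ Iᶜ, a j ≤ ∑ i, a i * t i := by
  have hcount : ∑ j ∈ Iᶜ, (1 - t j) ≤ ∑ i ∈ I, t i := by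
    rw [sum_sub_distrib, sum_const, nsmul_one, ← sum_add_sum_compl I t] at *
    linarith
  calc ∑ j ∈ Iᶜ, a j = ∑ j ∈ Iᶜ, a j * t j + ∑ j ∈ Iᶜ, a j * (1 - t j) := by
        rw [← sum_add_distrib]; exact sum_congr rfl fun j _ => by ring
    _ ≤ ∑ j ∈ Iᶜ, a j * t j + ∑ j ∈ Iᶜ, c * (1 - t j) := by
        gcongr with j hj
        · linarith [ht1 j]
        · exact haIc j (mem_compl.1 hj)
    _ ≤ ∑ j ∈ Iᶜ, a j * t j + ∑ i ∈ I, c * t i := by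
        rw [← mul_sum, ← mul_sum]; gcongr
    _ ≤ ∑ j ∈ Iᶜ, a j * t j + ∑ i ∈ I, a i * t i := by
        gcongr with i hi
        · exact ht0 i
        · exact haI i hi
    _ = ∑ i, a i * t i := by rw [add_comm, sum_add_sum_compl]

theorem sum_compl_sq_le_frobSq_sub_of_rank_le [DecidableEq n] {U : Matrix n n ℝ}
    {V : Matrix m n ℝ} (hU : Uᵀ * U = 1) (hV : Vᵀ * V = 1) {τ : n → ℝ} {I : Finset n}
    (hI : I.Nonempty) (hτ : ∀ i ∈ I, ∀ j ∉ I, τ j ^ 2 ≤ τ i ^ 2) {Y : Matrix n m ℝ}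
    (hY : Y.rank ≤ I.card) :
    ∑ j ∈ Iᶜ, τ j ^ 2 ≤ frobSq (Y - U * diagonal τ * Vᵀ) := by
  obtain ⟨r, w, hw, hYw, hcard⟩ := exists_orthonormal_mulVec_eq_zero Yᵀ
  set M := U * diagonal τ * Vᵀ
  set t : n → ℝ := fun i => ∑ a, (Uᵀ *ᵥ (w a).ofLp) i ^ 2
  obtain ⟨i₀, hi₀, hmin⟩ := I.exists_min_image (fun i => τ i ^ 2) hI
  have hMw : ∀ a, (Mᵀ *ᵥ (w a).ofLp) ⬝ᵥ (Mᵀ *ᵥ (w a).ofLp)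
      = ∑ i, τ i ^ 2 * (Uᵀ *ᵥ (w a).ofLp) i ^ 2 := fun a => by
    simp only [M, transpose_mul, diagonal_transpose, transpose_transpose, ← mulVec_mulVec]
    rw [dotProduct_mulVec_self_of_transpose_mul_self hV]
    simp only [dotProduct, mulVec_diagonal]
    exact sum_congr rfl fun i _ => by ring
  have hsum : (Iᶜ.card : ℝ) ≤ ∑ i, t i := by
    rw [sum_sum_sq_transpose_mulVec_apply (mul_eq_one_comm.1 hU) hw, Fintype.card_fin]
    rw [rank_transpose] at hcard
    exact_mod_cast (by rw [card_compl]; omega : Iᶜ.card ≤ r)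
  calc ∑ j ∈ Iᶜ, τ j ^ 2 ≤ ∑ i, τ i ^ 2 * t i :=
        sum_compl_le_sum_mul_of_threshold (sq_nonneg (τ i₀)) hmin (hτ i₀ hi₀)
          (fun i => sum_nonneg fun a _ => sq_nonneg _)
          (sum_sq_transpose_mulVec_apply_le_one hU hw) hsum
    _ = ∑ a, (Mᵀ *ᵥ (w a).ofLp) ⬝ᵥ (Mᵀ *ᵥ (w a).ofLp) := by
        simp only [hMw, t, mul_sum]
        exact sum_comm
    _ = ∑ a, ((Y - M)ᵀ *ᵥ (w a).ofLp) ⬝ᵥ ((Y - M)ᵀ *ᵥ (w a).ofLp) := by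
        simp only [transpose_sub, sub_mulVec, hYw, zero_sub, neg_dotProduct, dotProduct_neg,
          neg_neg]
    _ ≤ frobSq (Y - M) := sum_dotProduct_self_transpose_mulVec_le_frobSq _ hw

end

theorem subset_singular_triples_fixed_point_general {n : ℕ}
    (D : Matrix (Fin n) (Fin n) ℝ)
    (U V : Matrix (Fin n) (Fin n) ℝ) (σ : Fin n → ℝ)
    (hU : Uᵀ * U = 1) (hV : Vᵀ * V = 1)
    (hD : D = U * Matrix.diagonal σ * Vᵀ)
    (hσnonneg : ∀ i, 0 ≤ σ i)
    (K : ℕ) (hK1 : 1 ≤ K)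
    (α : ℝ) (hα : α ∈ Set.Icc (0 : ℝ) 1)
    (I : Finset (Fin n)) (hIcard : I.card = K)
    (hsep : ∀ i ∈ I, ∀ j ∉ I, (1 - α) * σ j ≤ σ i)
    (Xtilde : Matrix (Fin n) (Fin n) ℝ)
    (hX : Xtilde = ∑ i ∈ I,
      σ i • Matrix.vecMulVec (fun r => U r i) (fun c => V c i)) :
    Xtilde.rank ≤ K ∧
      ∀ Y : Matrix (Fin n) (Fin n) ℝ, Y.rank ≤ K →
        frob (Xtilde - (α • Xtilde + (1 - α) • D)) ≤
          frob (Y - (α • Xtilde + (1 - α) • D)) := by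
  set ν : Fin n → ℝ := fun i => if i ∈ I then σ i else 0
  set τ : Fin n → ℝ := fun i => if i ∈ I then σ i else (1 - α) * σ i
  have hXν : Xtilde = U * diagonal ν * Vᵀ := by
    simp only [hX, mul_diagonal_mul_transpose_eq_sum_vecMulVec, ν, ite_smul, zero_smul,
      sum_ite_mem, univ_inter]
  have hM : α • Xtilde + (1 - α) • D = U * diagonal τ * Vᵀ := by
    have hτ_eq : α • ν + (1 - α) • σ = τ := funext fun i => by
      by_cases hi : i ∈ I <;> simp [ν, τ, hi]; ring
    rw [hXν, hD, ← hτ_eq, Pi.add_def, ← diagonal_add, diagonal_smul, diagonal_smul]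
    simp only [Matrix.mul_add, Matrix.add_mul, Matrix.mul_smul, Matrix.smul_mul]
  refine ⟨?_, fun Y hY => Real.sqrt_le_sqrt ?_⟩
  · rw [hXν, ← hIcard]
    exact rank_mul_diagonal_mul_le_card U Vᵀ fun i hi => if_neg hi
  · have hτ_sq : ∀ i ∈ I, ∀ j ∉ I, τ j ^ 2 ≤ τ i ^ 2 := fun i hi j hj => by
      simp only [τ, hi, hj, if_true, if_false]
      exact pow_le_pow_left₀ (mul_nonneg (by linarith [hα.2]) (hσnonneg j)) (hsep i hi j hj) 2
    calc frobSq (Xtilde - (α • Xtilde + (1 - α) • D)) = ∑ j ∈ Iᶜ, τ j ^ 2 := by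
          rw [hM, hXν, ← sub_mul, ← mul_sub, diagonal_sub,
            frobSq_mul_diagonal_mul_transpose hU hV, ← sum_add_sum_compl I,
            sum_eq_zero fun i hi => by simp [ν, τ, hi], zero_add]
          exact sum_congr rfl fun j hj => by simp [ν, τ, mem_compl.1 hj]
      _ ≤ frobSq (Y - (α • Xtilde + (1 - α) • D)) := by
          rw [hM]
          exact sum_compl_sq_le_frobSq_sub_of_rank_le hU hV
            (card_pos.1 (hIcard ▸ hK1)) hτ_sq (hIcard ▸ hY)

/-- Fixed points of the rank-`K` ADMM update map from subsets of singular
triples: if `I` has size `K` and `σ_i ≥ (1−α) σ_j` for all `i ∈ I`, `j ∉ I`,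
then `X̃ = ∑_{i∈I} σ_i u_i v_iᵀ` minimizes `‖Y − (α X̃ + (1−α) D)‖_F` over all
matrices `Y` of rank at most `K`. -/
theorem subset_singular_triples_fixed_point {n : ℕ}
    (D : Matrix (Fin n) (Fin n) ℝ)
    (U V : Matrix (Fin n) (Fin n) ℝ) (σ : Fin n → ℝ)
    (hU : Uᵀ * U = 1) (hV : Vᵀ * V = 1)
    (hD : D = U * Matrix.diagonal σ * Vᵀ)
    (hσmono : Antitone σ) (hσnonneg : ∀ i, 0 ≤ σ i)
    (K : ℕ) (hK1 : 1 ≤ K) (hKn : K ≤ n)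
    (α : ℝ) (hα : α ∈ Set.Icc (0 : ℝ) 1)
    (I : Finset (Fin n)) (hIcard : I.card = K)
    (hsep : ∀ i ∈ I, ∀ j ∉ I, (1 - α) * σ j ≤ σ i)
    (Xtilde : Matrix (Fin n) (Fin n) ℝ)
    (hX : Xtilde = ∑ i ∈ I,
      σ i • Matrix.vecMulVec (fun r => U r i) (fun c => V c i)) :
    Xtilde.rank ≤ K ∧
      ∀ Y : Matrix (Fin n) (Fin n) ℝ, Y.rank ≤ K →
        frob (Xtilde - (α • Xtilde + (1 - α) • D)) ≤
          frob (Y - (α • Xtilde + (1 - α) • D)) :=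
  subset_singular_triples_fixed_point_general D U V σ hU hV hD hσnonneg K hK1 α hα I hIcard hsep
    Xtilde hX
end

section
/- Let D be a real n×n matrix and fix 1 ≤ K ≤ n and α ∈ [0, 1). Suppose X̃ is a real n×n matrix with rank(X̃) ≤ K that is a fixed point of the rank-K update map, i.e., X̃ minimizes ‖Y − (α·X̃ + (1−α)·D)‖_F over all n×n matrices Y with rank(Y) ≤ K. Then there exist orthogonal n×n matrices U, V, a function σ : Fin n → ℝ with σ₁ ≥ ⋯ ≥ σ_n ≥ 0 and D = U · diag(σ) · Vᵀ, and a subset I ⊆ {1, …, n} of size at most K, such that X̃ = Σ_{i∈I} σ_i u_i v_iᵀ. -/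
/-!
Perturbing a best rank-`K` approximation `X̃` of `M = α X̃ + (1 - α) D` inside the right ideal
`X̃ · Mat` and the left ideal `Mat · X̃` does not raise its rank, so the first-order condition
makes the residual `X̃ - M = (α - 1)(D - X̃)` orthogonal to the column and row spaces of `X̃`.
Hence `R = D - X̃` satisfies `X̃ᵀ R = 0` and `X̃ Rᵀ = 0`: compact SVDs of `X̃` and `R` have
mutually orthogonal left and right singular vectors and glue to a compact SVD of `D = X̃ + R`.
Completing the singular vectors to orthonormal bases (with singular value `0`) and sorting the
singular values gives a full SVD of `D` in which `X̃` is the sum of the triples coming from `X̃`;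
there are `rank X̃ ≤ K` of them.
-/

open Matrix Finset

theorem Fintype.exists_equiv_antitone_comp {ι β : Type*} [Fintype ι] [LinearOrder β] {n : ℕ}
    (h : Fintype.card ι = n) (σ : ι → β) : ∃ e : Fin n ≃ ι, Antitone (σ ∘ e) := by
  let e₀ : Fin n ≃ ι := (Fintype.equivFinOfCardEq h).symm
  exact ⟨(Tuple.sort (OrderDual.toDual ∘ σ ∘ e₀)).trans e₀,
    fun _ _ hab => Tuple.monotone_sort (OrderDual.toDual ∘ σ ∘ e₀) hab⟩

namespace Matrix

variable {α : Type*} {m n ι κ : Type*}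

theorem mul_diagonal_mul_transpose_eq_sum [Fintype ι] [DecidableEq ι] [CommSemiring α]
    (U : Matrix m ι α) (σ : ι → α) (V : Matrix n ι α) :
    U * diagonal σ * Vᵀ = ∑ i, σ i • vecMulVec (fun r => U r i) (fun c => V c i) := by
  ext p q
  simp only [mul_apply, diagonal_apply, mul_ite, mul_zero, Finset.sum_ite_eq', Finset.mem_univ,
    if_true, transpose_apply, sum_apply, smul_apply, vecMulVec_apply, smul_eq_mul]
  exact Finset.sum_congr rfl fun i _ => by ring

theorem submatrix_mul_diagonal_mul_transpose_submatrix [Fintype ι] [DecidableEq ι]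
    [CommSemiring α] (U : Matrix m ι α) (σ : ι → α) (V : Matrix n ι α) (s : Finset ι)
    (hσ : ∀ i ∉ s, σ i = 0) :
    U.submatrix id (Subtype.val : s → ι) * diagonal (fun i : s => σ i) *
        (V.submatrix id (Subtype.val : s → ι))ᵀ = U * diagonal σ * Vᵀ := by
  rw [mul_diagonal_mul_transpose_eq_sum, mul_diagonal_mul_transpose_eq_sum]
  refine (Finset.sum_coe_sort s
    (fun i => σ i • vecMulVec (fun r => U r i) (fun c => V c i))).trans ?_
  exact Finset.sum_subset (Finset.subset_univ s) fun i _ hi => by simp [hσ i hi]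

theorem submatrix_equiv_mul_diagonal_mul_transpose [Fintype ι] [DecidableEq ι] [CommSemiring α]
    {ι' : Type*} [Fintype ι'] [DecidableEq ι'] (U : Matrix m ι α) (σ : ι → α)
    (V : Matrix n ι α) (e : ι' ≃ ι) :
    U.submatrix id e * diagonal (σ ∘ e) * (V.submatrix id e)ᵀ = U * diagonal σ * Vᵀ := by
  rw [← submatrix_diagonal_equiv, submatrix_mul_equiv, transpose_submatrix, submatrix_mul_equiv,
    submatrix_id_id]

theorem fromCols_mul_diagonal_mul_transpose_fromCols [Fintype ι] [Fintype κ] [DecidableEq ι]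
    [DecidableEq κ] [CommSemiring α] (A : Matrix m ι α) (C : Matrix m κ α) (τ : ι → α)
    (ρ : κ → α) (B : Matrix n ι α) (E : Matrix n κ α) :
    fromCols A C * diagonal (Sum.elim τ ρ) * (fromCols B E)ᵀ =
      A * diagonal τ * Bᵀ + C * diagonal ρ * Eᵀ := by
  rw [← fromBlocks_diagonal, fromCols_mul_fromBlocks, transpose_fromCols, fromCols_mul_fromRows]
  simp

theorem diagonal_mul_diagonal_inv [Fintype ι] [DecidableEq ι] [Field α] {τ : ι → α}
    (hτ : ∀ i, τ i ≠ 0) : diagonal τ * diagonal τ⁻¹ = 1 := by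
  rw [diagonal_mul_diagonal, ← diagonal_one]
  exact congrArg diagonal (funext fun i => mul_inv_cancel₀ (hτ i))

theorem transpose_submatrix_mul_submatrix_eq_one [Fintype m] [Fintype ι] [DecidableEq ι]
    [CommSemiring α] {ι' : Type*} [Fintype ι'] [DecidableEq ι'] {U : Matrix m ι α}
    (hU : Uᵀ * U = 1) (e : ι' ≃ ι) : (U.submatrix id e)ᵀ * U.submatrix id e = 1 := by
  rw [transpose_submatrix, ← submatrix_mul _ _ _ _ _ Function.bijective_id, hU,
    submatrix_one_equiv]

theorem fromCols_transpose_mul_fromCols_eq_one [Fintype m] [DecidableEq ι] [DecidableEq κ]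
    [CommRing α] {A : Matrix m ι α} {C : Matrix m κ α} (hA : Aᵀ * A = 1) (hC : Cᵀ * C = 1)
    (hAC : Aᵀ * C = 0) : (fromCols A C)ᵀ * fromCols A C = 1 := by
  have hCA : Cᵀ * A = 0 := by simpa [transpose_mul] using congrArg transpose hAC
  rw [transpose_fromCols, fromRows_mul_fromCols, hA, hC, hAC, hCA, fromBlocks_one]

theorem card_le_card_of_transpose_mul_self_eq_one [Fintype m] [Fintype ι] [DecidableEq ι]
    [Field α] {A : Matrix m ι α} (hA : Aᵀ * A = 1) : Fintype.card ι ≤ Fintype.card m :=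
  calc Fintype.card ι = (Aᵀ * A).rank := by rw [hA, rank_one]
    _ ≤ Aᵀ.rank := rank_mul_le_left _ _
    _ ≤ Fintype.card m := by rw [rank_transpose]; exact rank_le_card_height A

theorem orthonormal_toLp_col_iff [Fintype m] [DecidableEq ι] (A : Matrix m ι ℝ) :
    Orthonormal ℝ (fun i => WithLp.toLp 2 (A.col i)) ↔ Aᵀ * A = 1 := by
  rw [← gram_eq_one_iff_orthonormal]
  congr!
  ext i j
  simp [gram_apply, mul_apply, PiLp.inner_apply, mul_comm]

theorem exists_fromCols_transpose_mul_self_eq_one [Fintype m] [Fintype ι] [Fintype κ]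
    [DecidableEq ι] [DecidableEq κ] {A : Matrix m ι ℝ} (hA : Aᵀ * A = 1)
    (hcard : Fintype.card m = Fintype.card ι + Fintype.card κ) :
    ∃ A' : Matrix m κ ℝ, (fromCols A A')ᵀ * fromCols A A' = 1 := by
  let v : ι ⊕ κ → EuclideanSpace ℝ m := Sum.elim (fun i => WithLp.toLp 2 (A.col i)) 0
  have hv : Orthonormal ℝ ((Set.range Sum.inl).domRestrict v) := by
    convert ((orthonormal_toLp_col_iff A).2 hA).comp _
      (Equiv.ofInjective _ Sum.inl_injective).symm.injective using 1
    funext ⟨_, i, rfl⟩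
    simp [v]
  obtain ⟨b, hb⟩ := hv.exists_orthonormalBasis_extension_of_card_eq (by simp [hcard])
  refine ⟨of fun p k => b (Sum.inr k) p, ?_⟩
  have hcols : fromCols A (of fun p k => b (Sum.inr k) p) = of fun p j => b j p := by
    ext p (i | k)
    · simp [hb (Sum.inl i) ⟨i, rfl⟩, v]
    · simp
  rw [hcols, ← orthonormal_toLp_col_iff]
  exact b.orthonormal

structure IsCompactSVD [Fintype m] [Fintype n] [Fintype ι] [DecidableEq ι] (X : Matrix m n ℝ)
    (A : Matrix m ι ℝ) (τ : ι → ℝ) (B : Matrix n ι ℝ) : Prop where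
  transpose_mul_left : Aᵀ * A = 1
  transpose_mul_right : Bᵀ * B = 1
  pos : ∀ i, 0 < τ i
  eq : X = A * diagonal τ * Bᵀ

namespace IsCompactSVD

variable [Fintype m] [Fintype n] [Fintype ι] [Fintype κ] [DecidableEq ι] [DecidableEq κ]
  {X : Matrix m n ℝ} {A : Matrix m ι ℝ} {τ : ι → ℝ} {B : Matrix n ι ℝ}

theorem transpose (h : IsCompactSVD X A τ B) : IsCompactSVD Xᵀ B τ A where
  transpose_mul_left := h.transpose_mul_right
  transpose_mul_right := h.transpose_mul_left
  pos := h.pos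
  eq := by simp [h.eq, transpose_mul, Matrix.mul_assoc]

theorem eq_mul_mul_diagonal_inv (h : IsCompactSVD X A τ B) : A = X * B * diagonal τ⁻¹ := by
  rw [h.eq, Matrix.mul_assoc A, Matrix.mul_assoc A, Matrix.mul_assoc (diagonal τ),
    h.transpose_mul_right, Matrix.mul_one, Matrix.mul_assoc,
    diagonal_mul_diagonal_inv fun i => (h.pos i).ne', Matrix.mul_one]

theorem transpose_mul_eq_zero {n' : Type*} [Fintype n'] {R : Matrix m n' ℝ} {C : Matrix m κ ℝ}
    {ρ : κ → ℝ} {E : Matrix n' κ ℝ} (hX : IsCompactSVD X A τ B) (hR : IsCompactSVD R C ρ E)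
    (h : Xᵀ * R = 0) : Aᵀ * C = 0 := by
  rw [hX.eq_mul_mul_diagonal_inv, hR.eq_mul_mul_diagonal_inv]
  simp only [transpose_mul, Matrix.mul_assoc]
  rw [← Matrix.mul_assoc Xᵀ, h]
  simp

theorem add {R : Matrix m n ℝ} {C : Matrix m κ ℝ} {ρ : κ → ℝ} {E : Matrix n κ ℝ}
    (hX : IsCompactSVD X A τ B) (hR : IsCompactSVD R C ρ E) (h₁ : Xᵀ * R = 0)
    (h₂ : X * Rᵀ = 0) :
    IsCompactSVD (X + R) (fromCols A C) (Sum.elim τ ρ) (fromCols B E) where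
  transpose_mul_left := fromCols_transpose_mul_fromCols_eq_one hX.transpose_mul_left
    hR.transpose_mul_left (hX.transpose_mul_eq_zero hR h₁)
  transpose_mul_right := fromCols_transpose_mul_fromCols_eq_one hX.transpose_mul_right
    hR.transpose_mul_right
    (hX.transpose.transpose_mul_eq_zero hR.transpose (by rwa [transpose_transpose]))
  pos := Sum.rec hX.pos hR.pos
  eq := by rw [fromCols_mul_diagonal_mul_transpose_fromCols, ← hX.eq, ← hR.eq]

end IsCompactSVD

theorem exists_orthogonal_diagonalization_transpose_mul_self [Fintype m] [Fintype n]
    [DecidableEq n] (X : Matrix m n ℝ) :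
    ∃ (W : Matrix n n ℝ) (ev : n → ℝ), Wᵀ * W = 1 ∧ (∀ i, 0 ≤ ev i) ∧
      Xᵀ * X = W * diagonal ev * Wᵀ ∧ Fintype.card {i // ev i ≠ 0} = X.rank := by
  have hpsd : (Xᵀ * X).PosSemidef := by simpa using posSemidef_conjTranspose_mul_self X
  refine ⟨hpsd.isHermitian.eigenvectorUnitary, hpsd.isHermitian.eigenvalues, ?_,
    hpsd.eigenvalues_nonneg, ?_, ?_⟩
  · have := Unitary.coe_star_mul_self hpsd.isHermitian.eigenvectorUnitary
    rwa [star_eq_conjTranspose, conjTranspose_eq_transpose_of_trivial] at this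
  · simpa [Unitary.conjStarAlgAut_apply, Function.comp_def, star_eq_conjTranspose] using
      hpsd.isHermitian.spectral_theorem
  · rw [← hpsd.isHermitian.rank_eq_card_non_zero_eigs, rank_transpose_mul_self]

-- `X (1 - B Bᵀ)` vanishes because its Gram matrix `(1 - B Bᵀ) Xᵀ X (1 - B Bᵀ)` does.
theorem mul_mul_transpose_eq_self [Fintype m] [Fintype n] [Fintype ι] [DecidableEq ι]
    {X : Matrix m n ℝ} {B : Matrix n ι ℝ} {d : ι → ℝ} (hB : Bᵀ * B = 1)
    (hG : Xᵀ * X = B * diagonal d * Bᵀ) : X * (B * Bᵀ) = X := by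
  classical
  have hGP : Xᵀ * X * (1 - B * Bᵀ) = 0 := by
    rw [hG, Matrix.mul_sub, Matrix.mul_one]
    simp only [Matrix.mul_assoc]
    rw [← Matrix.mul_assoc Bᵀ B, hB, Matrix.one_mul, sub_self]
  have : (X * (1 - B * Bᵀ))ᴴ * (X * (1 - B * Bᵀ)) = 0 := by
    rw [conjTranspose_eq_transpose_of_trivial, transpose_mul, Matrix.mul_assoc,
      ← Matrix.mul_assoc Xᵀ, hGP, Matrix.mul_zero]
  rw [conjTranspose_mul_self_eq_zero, Matrix.mul_sub, Matrix.mul_one, sub_eq_zero] at this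
  exact this.symm

theorem exists_isCompactSVD [Fintype m] [Fintype n] [DecidableEq n] (X : Matrix m n ℝ) :
    ∃ (s : Finset n) (A : Matrix m s ℝ) (τ : s → ℝ) (B : Matrix n s ℝ),
      IsCompactSVD X A τ B ∧ s.card = X.rank := by
  obtain ⟨W, ev, hW, hev, hspec, hrank⟩ := exists_orthogonal_diagonalization_transpose_mul_self X
  set s := univ.filter fun i => ev i ≠ 0
  set B : Matrix n s ℝ := W.submatrix id Subtype.val
  set τ : s → ℝ := fun i => √(ev i)
  have hev : ∀ i : s, 0 < ev i := fun i => (hev i).lt_of_ne' (mem_filter.1 i.2).2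
  have hτ : ∀ i, 0 < τ i := fun i => Real.sqrt_pos.2 (hev i)
  have hB : Bᵀ * B = 1 := by
    rw [transpose_submatrix, ← submatrix_mul _ _ _ _ _ Function.bijective_id, hW,
      submatrix_one _ Subtype.val_injective]
  have hG : Xᵀ * X = B * diagonal (fun i : s => ev i) * Bᵀ := by
    rw [hspec, submatrix_mul_diagonal_mul_transpose_submatrix]
    intro i hi
    simpa [s] using hi
  have hΛ : Bᵀ * (Xᵀ * X) * B = diagonal (fun i : s => ev i) := by
    rw [hG, Matrix.mul_assoc, Matrix.mul_assoc, hB, Matrix.mul_one, ← Matrix.mul_assoc, hB,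
      Matrix.one_mul]
  refine ⟨s, X * B * diagonal τ⁻¹, τ, B, ⟨?_, hB, hτ, ?_⟩, by rw [← hrank, Fintype.card_subtype]⟩
  · calc (X * B * diagonal τ⁻¹)ᵀ * (X * B * diagonal τ⁻¹)
        = diagonal τ⁻¹ * (Bᵀ * (Xᵀ * X) * B) * diagonal τ⁻¹ := by
          simp only [transpose_mul, diagonal_transpose, Matrix.mul_assoc]
      _ = 1 := by
          rw [hΛ, diagonal_mul_diagonal, diagonal_mul_diagonal, ← diagonal_one]
          congr 1
          funext i
          simp only [Pi.inv_apply, τ]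
          field_simp
          rw [Real.sq_sqrt (hev i).le, div_self (hev i).ne']
  · rw [Matrix.mul_assoc (X * B), (commute_diagonal _ _).eq,
      diagonal_mul_diagonal_inv fun i => (hτ i).ne', Matrix.mul_one, Matrix.mul_assoc,
      mul_mul_transpose_eq_self hB hG]

theorem exists_svd_add_of_transpose_mul_eq_zero {n : ℕ} {X R : Matrix (Fin n) (Fin n) ℝ}
    (h₁ : Xᵀ * R = 0) (h₂ : X * Rᵀ = 0) :
    ∃ (U V : Matrix (Fin n) (Fin n) ℝ) (σ : Fin n → ℝ) (I : Finset (Fin n)),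
      Uᵀ * U = 1 ∧ Vᵀ * V = 1 ∧ Antitone σ ∧ (∀ i, 0 ≤ σ i) ∧
      X + R = U * diagonal σ * Vᵀ ∧ I.card = X.rank ∧
      X = ∑ i ∈ I, σ i • vecMulVec (fun r => U r i) (fun c => V c i) := by
  obtain ⟨s, A, τ, B, hX, hs⟩ := exists_isCompactSVD X
  obtain ⟨t, C, ρ, E, hR, -⟩ := exists_isCompactSVD R
  have hD := hX.add hR h₁ h₂
  set k := n - Fintype.card (s ⊕ t)
  have hk : Fintype.card (Fin n) = Fintype.card (s ⊕ t) + Fintype.card (Fin k) := by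
    have := card_le_card_of_transpose_mul_self_eq_one hD.transpose_mul_left
    simp only [Fintype.card_fin] at this ⊢
    omega
  obtain ⟨P, hP⟩ := exists_fromCols_transpose_mul_self_eq_one hD.transpose_mul_left hk
  obtain ⟨Q, hQ⟩ := exists_fromCols_transpose_mul_self_eq_one hD.transpose_mul_right hk
  set U₀ := fromCols (fromCols A C) P
  set V₀ := fromCols (fromCols B E) Q
  set σ₀ : (s ⊕ t) ⊕ Fin k → ℝ := Sum.elim (Sum.elim τ ρ) 0
  have hσ₀ : ∀ i, 0 ≤ σ₀ i := by
    rintro ((i | i) | i)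
    exacts [(hX.pos i).le, (hR.pos i).le, le_rfl]
  obtain ⟨e, he⟩ := Fintype.exists_equiv_antitone_comp
    (by rw [Fintype.card_sum, ← hk, Fintype.card_fin]) σ₀
  let I₀ := univ.map (Function.Embedding.inl.trans Function.Embedding.inl : s ↪ (s ⊕ t) ⊕ Fin k)
  refine ⟨U₀.submatrix id e, V₀.submatrix id e, σ₀ ∘ e, I₀.map e.symm.toEmbedding,
    transpose_submatrix_mul_submatrix_eq_one hP e, transpose_submatrix_mul_submatrix_eq_one hQ e,
    he, fun i => hσ₀ (e i), ?_, ?_, ?_⟩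
  · rw [submatrix_equiv_mul_diagonal_mul_transpose, fromCols_mul_diagonal_mul_transpose_fromCols,
      ← hD.eq]
    simp
  · simp [I₀, hs]
  · rw [sum_map]
    simp [I₀, hX.eq, mul_diagonal_mul_transpose_eq_sum, U₀, V₀, σ₀]

end Matrix

theorem frob_sq {n : ℕ} (M : Matrix (Fin n) (Fin n) ℝ) : frob M ^ 2 = trace (Mᵀ * M) := by
  rw [frob, Real.sq_sqrt (by positivity), Finset.sum_comm]
  simp [trace, mul_apply, sq]

theorem frob_add_smul_sq {n : ℕ} (Z W : Matrix (Fin n) (Fin n) ℝ) (t : ℝ) :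
    frob (Z + t • W) ^ 2 = frob Z ^ 2 + 2 * t * trace (Zᵀ * W) + t ^ 2 * frob W ^ 2 := by
  have hWZ : trace (Wᵀ * Z) = trace (Zᵀ * W) := by
    rw [← trace_transpose, transpose_mul, transpose_transpose]
  simp only [frob_sq, transpose_add, transpose_smul, Matrix.add_mul, Matrix.mul_add,
    Matrix.smul_mul, Matrix.mul_smul, trace_add, trace_smul, hWZ, smul_eq_mul]
  ring

theorem trace_transpose_mul_eq_zero_of_forall_frob_le {n : ℕ} {Z W : Matrix (Fin n) (Fin n) ℝ}
    (h : ∀ t : ℝ, frob Z ≤ frob (Z + t • W)) : trace (Zᵀ * W) = 0 := by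
  have hquad : ∀ t : ℝ, 0 ≤ frob W ^ 2 * (t * t) + 2 * trace (Zᵀ * W) * t + 0 := fun t => by
    have : frob Z ^ 2 ≤ frob (Z + t • W) ^ 2 := pow_le_pow_left₀ (Real.sqrt_nonneg _) (h t) 2
    rw [frob_add_smul_sq] at this
    nlinarith
  have := discrim_le_zero hquad
  rw [discrim] at this
  nlinarith [sq_nonneg (trace (Zᵀ * W))]

theorem residual_orthogonal_of_forall_frob_le {n K : ℕ} {M X : Matrix (Fin n) (Fin n) ℝ}
    (hrank : X.rank ≤ K)
    (hmin : ∀ Y : Matrix (Fin n) (Fin n) ℝ, Y.rank ≤ K → frob (X - M) ≤ frob (Y - M)) :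
    Xᵀ * (X - M) = 0 ∧ X * (X - M)ᵀ = 0 := by
  set Z := X - M
  have hperturb : ∀ W : Matrix (Fin n) (Fin n) ℝ, (∀ t : ℝ, (X + t • W).rank ≤ X.rank) →
      trace (Zᵀ * W) = 0 := fun W hW =>
    trace_transpose_mul_eq_zero_of_forall_frob_le fun t => by
      simpa [Z, add_sub_right_comm] using hmin _ ((hW t).trans hrank)
  -- The perturbations `X (1 + t (Zᵀ X)ᴴ)` and `(1 + t (X Zᵀ)ᴴ) X` keep the rank, and their
  -- first-order conditions read `tr (A Aᴴ) = 0` for `A = Zᵀ X`, resp. `A = X Zᵀ`.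
  constructor
  · have hZX : Zᵀ * X = 0 := by
      rw [← trace_mul_conjTranspose_self_eq_zero_iff, Matrix.mul_assoc]
      refine hperturb _ fun t => ?_
      rw [← Matrix.mul_smul, ← mul_one_add]
      exact rank_mul_le_left _ _
    simpa [transpose_mul] using congrArg transpose hZX
  · rw [← trace_mul_conjTranspose_self_eq_zero_iff, ← trace_mul_cycle, Matrix.mul_assoc]
    refine hperturb _ fun t => ?_
    rw [← Matrix.smul_mul, ← one_add_mul]
    exact rank_mul_le_right _ _

theorem fixed_point_is_subset_of_singular_triples_general {n : ℕ}
    (D : Matrix (Fin n) (Fin n) ℝ)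
    (K : ℕ)
    (α : ℝ) (hα : α ∈ Set.Ico (0 : ℝ) 1)
    (Xtilde : Matrix (Fin n) (Fin n) ℝ)
    (hrank : Xtilde.rank ≤ K)
    (hfix : ∀ Y : Matrix (Fin n) (Fin n) ℝ, Y.rank ≤ K →
      frob (Xtilde - (α • Xtilde + (1 - α) • D)) ≤
        frob (Y - (α • Xtilde + (1 - α) • D))) :
    ∃ (U V : Matrix (Fin n) (Fin n) ℝ) (σ : Fin n → ℝ) (I : Finset (Fin n)),
      Uᵀ * U = 1 ∧ Vᵀ * V = 1 ∧
      Antitone σ ∧ (∀ i, 0 ≤ σ i) ∧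
      D = U * Matrix.diagonal σ * Vᵀ ∧
      I.card ≤ K ∧
      Xtilde = ∑ i ∈ I,
        σ i • Matrix.vecMulVec (fun r => U r i) (fun c => V c i) := by
  have hα₁ : α - 1 ≠ 0 := sub_ne_zero.2 hα.2.ne
  have hres : Xtilde - (α • Xtilde + (1 - α) • D) = (α - 1) • (D - Xtilde) := by module
  obtain ⟨h₁, h₂⟩ := residual_orthogonal_of_forall_frob_le hrank hfix
  rw [hres, Matrix.mul_smul, smul_eq_zero] at h₁
  rw [hres, transpose_smul, Matrix.mul_smul, smul_eq_zero] at h₂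
  obtain ⟨U, V, σ, I, hU, hV, hσ, hσ₀, hD, hI, hX⟩ :=
    exists_svd_add_of_transpose_mul_eq_zero (h₁.resolve_left hα₁) (h₂.resolve_left hα₁)
  rw [add_sub_cancel] at hD
  exact ⟨U, V, σ, I, hU, hV, hσ, hσ₀, hD, hI ▸ hrank, hX⟩

/-- Converse characterization of fixed points of the rank-`K` ADMM update map:
if `X̃` has rank at most `K` and minimizes `‖Y − (α X̃ + (1−α) D)‖_F` over all
matrices `Y` of rank at most `K`, then there is an SVD `D = U diag(σ) Vᵀ` and a
subset `I` of at most `K` indices such that `X̃ = ∑_{i∈I} σ_i u_i v_iᵀ`. -/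
theorem fixed_point_is_subset_of_singular_triples {n : ℕ}
    (D : Matrix (Fin n) (Fin n) ℝ)
    (K : ℕ) (hK1 : 1 ≤ K) (hKn : K ≤ n)
    (α : ℝ) (hα : α ∈ Set.Ico (0 : ℝ) 1)
    (Xtilde : Matrix (Fin n) (Fin n) ℝ)
    (hrank : Xtilde.rank ≤ K)
    (hfix : ∀ Y : Matrix (Fin n) (Fin n) ℝ, Y.rank ≤ K →
      frob (Xtilde - (α • Xtilde + (1 - α) • D)) ≤
        frob (Y - (α • Xtilde + (1 - α) • D))) :
    ∃ (U V : Matrix (Fin n) (Fin n) ℝ) (σ : Fin n → ℝ) (I : Finset (Fin n)),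
      Uᵀ * U = 1 ∧ Vᵀ * V = 1 ∧
      Antitone σ ∧ (∀ i, 0 ≤ σ i) ∧
      D = U * Matrix.diagonal σ * Vᵀ ∧
      I.card ≤ K ∧
      Xtilde = ∑ i ∈ I,
        σ i • Matrix.vecMulVec (fun r => U r i) (fun c => V c i) :=
  fixed_point_is_subset_of_singular_triples_general D K α hα Xtilde hrank hfix
end
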